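/- arXiv:2510.08489 — 3 statements merged into one kernel-verified Lean document; each statement's English description precedes it below -/
import Mathlib

section
/- The function c*(b1) = r1*r2*((s2/b1 + s3*σ)*(p + b1*s1)/(t - b1*s1) + s2/b1 + s3*σ*g) attains a local minimum on (0, t/s1) at b* = (-s1*s2 + sqrt(s1^2*s2^2 + s1*s2*s3*σ*t)) / (s1*s3*σ). -/
/-! The critical point `b*` is the positive root of `s1 s3 σ b² + 2 s1 s2 b - s2 t = 0`.
Clearing denominators, `c*(b) - c*(b*)` is a positive multiple of `(b - b*)² / (b (t - s1 b))`
on the whole interval, so `b*` is even a global minimum there. -/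

open Set

theorem mul_sq_add_two_mul_neg_add_sqrt_div {α β γ D : ℝ} (hα : α ≠ 0) (hD : β ^ 2 + α * γ = D)
    (hD₀ : 0 ≤ D) : α * ((-β + √D) / α) ^ 2 + 2 * β * ((-β + √D) / α) = γ := by
  have hsq : √D ^ 2 = D := Real.sq_sqrt hD₀
  field_simp
  linear_combination hsq - hD

theorem neg_add_sqrt_div_pos {α β γ D : ℝ} (hα : 0 < α) (hγ : 0 < γ) (hD : β ^ 2 + α * γ = D) :
    0 < (-β + √D) / α := by
  have hβ : β < √D := Real.lt_sqrt_of_sq_lt (by nlinarith)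
  exact div_pos (by linarith) hα

section RationalCost

variable {A c s p t a x : ℝ}

theorem cost_eq_div (hx : x ≠ 0) (htx : t - x * s ≠ 0) :
    (c / x + A) * (p + x * s) / (t - x * s) + c / x
      = (A * s * x ^ 2 + A * p * x + c * (p + t)) / (x * (t - x * s)) := by
  field_simp
  ring

variable (hA : 0 < A) (hc : 0 < c) (hs : 0 < s) (hp : 0 < p) (ht : 0 < t)
  (ha : 0 < a) (hat : a < t / s) (hcrit : s * A * a ^ 2 + 2 * s * c * a = c * t)
include hA hc hs hp ht ha hat hcrit

theorem cost_le_cost (hx : 0 < x) (hxt : x < t / s) :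
    (c / a + A) * (p + a * s) / (t - a * s) + c / a
      ≤ (c / x + A) * (p + x * s) / (t - x * s) + c / x := by
  have hta : 0 < t - a * s := by rw [lt_div_iff₀ hs] at hat; linarith
  have htx : 0 < t - x * s := by rw [lt_div_iff₀ hs] at hxt; linarith
  rw [cost_eq_div ha.ne' hta.ne', cost_eq_div hx.ne' htx.ne',
    div_le_div_iff₀ (mul_pos ha hta) (mul_pos hx htx)]
  have hgap : (A * s * x ^ 2 + A * p * x + c * (p + t)) * (a * (t - a * s))
      - (A * s * a ^ 2 + A * p * a + c * (p + t)) * (x * (t - x * s))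
      = s * (A * a * (t + p) + c * (p + t)) * (x - a) ^ 2 := by
    linear_combination (x - a) * (p + t) * hcrit
  nlinarith [mul_nonneg (mul_pos hs (by positivity : 0 < A * a * (t + p) + c * (p + t))).le
    (sq_nonneg (x - a))]

theorem isMinOn_cost :
    IsMinOn (fun y => (c / y + A) * (p + y * s) / (t - y * s) + c / y) (Ioo 0 (t / s)) a :=
  fun _ hx => cost_le_cost hA hc hs hp ht ha hat hcrit hx.1 hx.2

end RationalCost

theorem cstar_local_min_general
    (r1 r2 s1 s2 s3 σ g t p : ℝ)
    (hr1 : 0 < r1) (hr2 : 0 < r2) (hs1 : 0 < s1) (hs2 : 0 < s2)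
    (hs3 : 0 < s3) (hσ : 0 < σ) (ht : 0 < t) (hp : 0 < p)
    (hbt : s1 * ((-(s1 * s2) + Real.sqrt (s1 ^ 2 * s2 ^ 2 + s1 * s2 * s3 * σ * t))
        / (s1 * s3 * σ)) < t) :
    IsLocalMinOn
      (fun b1 => r1 * r2 * ((s2 / b1 + s3 * σ) * (p + b1 * s1) / (t - b1 * s1)
        + s2 / b1 + s3 * σ * g))
      (Set.Ioo 0 (t / s1))
      ((-(s1 * s2) + Real.sqrt (s1 ^ 2 * s2 ^ 2 + s1 * s2 * s3 * σ * t)) / (s1 * s3 * σ)) := by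
  have hα : 0 < s1 * s3 * σ := by positivity
  have hD : (s1 * s2) ^ 2 + s1 * s3 * σ * (s2 * t) = s1 ^ 2 * s2 ^ 2 + s1 * s2 * s3 * σ * t := by
    ring
  have hb := neg_add_sqrt_div_pos hα (by positivity) hD
  have hcrit := mul_sq_add_two_mul_neg_add_sqrt_div hα.ne' hD (by positivity)
  have hmin := isMinOn_cost (mul_pos hs3 hσ) hs2 hs1 hp ht hb
    ((lt_div_iff₀ hs1).2 (by linarith)) (by linear_combination hcrit)
  have hmono : Monotone fun u => r1 * r2 * (u + s3 * σ * g) := fun _ _ huv =>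
    mul_le_mul_of_nonneg_left (by linarith) (mul_pos hr1 hr2).le
  exact (hmin.comp_mono hmono).localize

theorem cstar_local_min
    (r1 r2 s1 s2 s3 σ g t p : ℝ)
    (hr1 : 0 < r1) (hr2 : 0 < r2) (hs1 : 0 < s1) (hs2 : 0 < s2)
    (hs3 : 0 < s3) (hσ : 0 < σ) (hg : 0 < g) (ht : 0 < t) (hp : 0 < p)
    (hbt : s1 * ((-(s1 * s2) + Real.sqrt (s1 ^ 2 * s2 ^ 2 + s1 * s2 * s3 * σ * t))
        / (s1 * s3 * σ)) < t) :
    IsLocalMinOn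
      (fun b1 => r1 * r2 * ((s2 / b1 + s3 * σ) * (p + b1 * s1) / (t - b1 * s1)
        + s2 / b1 + s3 * σ * g))
      (Set.Ioo 0 (t / s1))
      ((-(s1 * s2) + Real.sqrt (s1 ^ 2 * s2 ^ 2 + s1 * s2 * s3 * σ * t)) / (s1 * s3 * σ)) :=
  cstar_local_min_general r1 r2 s1 s2 s3 σ g t p hr1 hr2 hs1 hs2 hs3 hσ ht hp hbt
end

section
/- The optimal batch size function b1*(σ) = (-s1*s2 + sqrt(s1^2*s2^2 + s1*s2*s3*σ*t)) / (s1*s3*σ) is antitone (monotonically non-increasing) in σ on (0, ∞): if 0 < σ1 ≤ σ2 then b1*(σ2) ≤ b1*(σ1). -/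
/-!
Rationalizing the numerator gives
`b1*(σ) = s2 t / (s1 s2 + √(s1² s2² + s1 s2 s3 σ t))`, whose denominator increases with `σ`.
-/

open Set

lemma neg_add_sqrt_sq_add_mul_div_eq {a c x : ℝ} (ha : 0 < a) (hcx : 0 ≤ c * x) (hx : x ≠ 0) :
    (-a + √(a ^ 2 + c * x)) / x = c / (a + √(a ^ 2 + c * x)) := by
  have hsq : √(a ^ 2 + c * x) ^ 2 = a ^ 2 + c * x := Real.sq_sqrt (by positivity)
  have hden : 0 < a + √(a ^ 2 + c * x) := by positivity
  rw [div_eq_div_iff hx hden.ne']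
  linear_combination hsq

lemma antitoneOn_neg_add_sqrt_sq_add_mul_div {a c : ℝ} (ha : 0 < a) (hc : 0 ≤ c) :
    AntitoneOn (fun x => (-a + √(a ^ 2 + c * x)) / x) (Ioi 0) := by
  intro x (hx : 0 < x) y (hy : 0 < y) hxy
  dsimp only
  rw [neg_add_sqrt_sq_add_mul_div_eq ha (by positivity) hx.ne',
    neg_add_sqrt_sq_add_mul_div_eq ha (by positivity) hy.ne']
  gcongr

theorem b1_star_antitone
    (s1 s2 s3 t : ℝ)
    (hs1 : 0 < s1) (hs2 : 0 < s2) (hs3 : 0 < s3) (ht : 0 < t)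
    (σ1 σ2 : ℝ) (hσ1 : 0 < σ1) (hle : σ1 ≤ σ2) :
    (-(s1 * s2) + Real.sqrt (s1 ^ 2 * s2 ^ 2 + s1 * s2 * s3 * σ2 * t)) / (s1 * s3 * σ2)
      ≤ (-(s1 * s2) + Real.sqrt (s1 ^ 2 * s2 ^ 2 + s1 * s2 * s3 * σ1 * t)) / (s1 * s3 * σ1) := by
  set f := fun x => (-(s1 * s2) + √((s1 * s2) ^ 2 + (s1 * s2 * s3 * t) * x)) / x
  have hf : ∀ σ, (-(s1 * s2) + √(s1 ^ 2 * s2 ^ 2 + s1 * s2 * s3 * σ * t)) / (s1 * s3 * σ)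
      = f σ / (s1 * s3) := fun σ => by
    rw [div_div, mul_comm σ, mul_pow]
    ring_nf
  rw [hf, hf]
  have hmono : f σ2 ≤ f σ1 :=
    antitoneOn_neg_add_sqrt_sq_add_mul_div (by positivity) (by positivity) hσ1
      (hσ1.trans_le hle) hle
  gcongr
end

section
/- If α > 1 and e ≥ σ ≥ e/α with σ, e > 0, then b1*(σ) ≤ α * b1*(e), where b1*(x) = (-s1*s2 + sqrt(s1^2*s2^2 + s1*s2*s3*x*t)) / (s1*s3*x). -/
/-!
With `a = s1 s2` and `c = s1 s2 s3 t` we have `b1*(x) = rootQuot a c x / (s1 s3)`, and rationalising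
the numerator gives `rootQuot a c x = c / (a + √(a² + c x))`. So the claim reduces to
`a + √(a² + c e) ≤ α (a + √(a² + c σ))`, which holds because `e ≤ ασ` and `α ≥ 1` make the radicand
on the left at most `α²` times the one on the right.
-/

open Real

noncomputable def rootQuot (a c x : ℝ) : ℝ := (-a + √(a ^ 2 + c * x)) / x

lemma neg_add_sqrt_sq_add_eq_div {a y : ℝ} (ha : 0 < a) (hy : 0 ≤ y) :
    -a + √(a ^ 2 + y) = y / (a + √(a ^ 2 + y)) := by
  have hden : 0 < a + √(a ^ 2 + y) := by positivity
  rw [eq_div_iff hden.ne']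
  linear_combination sq_sqrt (by positivity : 0 ≤ a ^ 2 + y)

lemma rootQuot_eq_div {a c x : ℝ} (ha : 0 < a) (hc : 0 ≤ c) (hx : 0 < x) :
    rootQuot a c x = c / (a + √(a ^ 2 + c * x)) := by
  rw [rootQuot, neg_add_sqrt_sq_add_eq_div ha (by positivity)]
  field_simp

lemma add_sqrt_sq_add_mul_le {a c α e σ : ℝ} (ha : 0 ≤ a) (hc : 0 ≤ c) (hα : 1 ≤ α)
    (hσ : 0 ≤ σ) (he : e ≤ α * σ) :
    a + √(a ^ 2 + c * e) ≤ α * (a + √(a ^ 2 + c * σ)) := by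
  have hα0 : 0 ≤ α := zero_le_one.trans hα
  have hrad : a ^ 2 + c * e ≤ α ^ 2 * (a ^ 2 + c * σ) := by
    have hce : c * e ≤ α * (c * σ) := by
      simpa only [mul_left_comm] using mul_le_mul_of_nonneg_left he hc
    have hα2 : α ≤ α ^ 2 := by nlinarith
    nlinarith [mul_nonneg hc hσ, sq_nonneg a]
  have hsqrt : √(a ^ 2 + c * e) ≤ α * √(a ^ 2 + c * σ) := by
    calc √(a ^ 2 + c * e) ≤ √(α ^ 2 * (a ^ 2 + c * σ)) := sqrt_le_sqrt hrad
      _ = α * √(a ^ 2 + c * σ) := by rw [sqrt_mul (sq_nonneg α), sqrt_sq hα0]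
  linarith [le_mul_of_one_le_left ha hα]

lemma rootQuot_le_mul_rootQuot {a c α e σ : ℝ} (ha : 0 < a) (hc : 0 ≤ c) (hα : 1 ≤ α)
    (hσ : 0 < σ) (he : 0 < e) (heσ : e ≤ α * σ) :
    rootQuot a c σ ≤ α * rootQuot a c e := by
  have hα0 : 0 < α := zero_lt_one.trans_le hα
  rw [rootQuot_eq_div ha hc hσ, rootQuot_eq_div ha hc he, mul_div_assoc',
    ← mul_div_mul_left c _ hα0.ne']
  exact div_le_div_of_nonneg_left (by positivity) (by positivity)
    (add_sqrt_sq_add_mul_le ha.le hc hα hσ.le heσ)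

theorem b1_star_alpha_bound_general
    (s1 s2 s3 t α e σ : ℝ)
    (hs1 : 0 < s1) (hs2 : 0 < s2) (hs3 : 0 < s3) (ht : 0 < t)
    (hα : 1 < α) (he : 0 < e) (hσ : 0 < σ)
    (h2 : e / α ≤ σ) :
    (-(s1 * s2) + Real.sqrt (s1 ^ 2 * s2 ^ 2 + s1 * s2 * s3 * σ * t)) / (s1 * s3 * σ)
      ≤ α * ((-(s1 * s2) + Real.sqrt (s1 ^ 2 * s2 ^ 2 + s1 * s2 * s3 * e * t)) / (s1 * s3 * e)) := by
  have hb1 : ∀ x, (-(s1 * s2) + √(s1 ^ 2 * s2 ^ 2 + s1 * s2 * s3 * x * t)) / (s1 * s3 * x)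
      = rootQuot (s1 * s2) (s1 * s2 * s3 * t) x / (s1 * s3) := fun x => by
    rw [rootQuot, div_div, mul_comm x]
    ring_nf
  have heσ : e ≤ α * σ := by rwa [div_le_iff₀ (zero_lt_one.trans hα), mul_comm] at h2
  rw [hb1, hb1, ← mul_div_assoc]
  exact div_le_div_of_nonneg_right
    (rootQuot_le_mul_rootQuot (by positivity) (by positivity) hα.le hσ he heσ) (by positivity)

theorem b1_star_alpha_bound
    (s1 s2 s3 t α e σ : ℝ)
    (hs1 : 0 < s1) (hs2 : 0 < s2) (hs3 : 0 < s3) (ht : 0 < t)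
    (hα : 1 < α) (he : 0 < e) (hσ : 0 < σ)
    (h1 : σ ≤ e) (h2 : e / α ≤ σ) :
    (-(s1 * s2) + Real.sqrt (s1 ^ 2 * s2 ^ 2 + s1 * s2 * s3 * σ * t)) / (s1 * s3 * σ)
      ≤ α * ((-(s1 * s2) + Real.sqrt (s1 ^ 2 * s2 ^ 2 + s1 * s2 * s3 * e * t)) / (s1 * s3 * e)) :=
  b1_star_alpha_bound_general s1 s2 s3 t α e σ hs1 hs2 hs3 ht hα he hσ h2
end
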